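/- For every finite simple graph G with at least one vertex, the path-width of G is at most td(G) − 1; equivalently, pw(G) + 1 ≤ td(G). -/

import Mathlib

/-- A rooted forest on the vertex set `V`, represented via its ancestor relation:
`anc u v` means that `u` is a (weak) ancestor of `v`, i.e. `u` lies on the path
from `v` to the root of its component tree.  The ancestor relation of a rooted
forest is a partial order in which the set of ancestors of any vertex is a chain. -/
structure RootedForest (V : Type*) where
  anc : V → V → Prop
  refl : ∀ v, anc v v
  antisymm : ∀ u v, anc u v → anc v u → u = v
  trans : ∀ u v w, anc u v → anc v w → anc u w
  upChain : ∀ u v w, anc u w → anc v w → anc u v ∨ anc v u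

/-- The closure `clos(F)` of a rooted forest `F`: the simple graph with an edge `xy`
whenever `x` is a strict ancestor of `y` or vice versa. -/
def RootedForest.closure {V : Type*} (F : RootedForest V) : SimpleGraph V where
  Adj u v := u ≠ v ∧ (F.anc u v ∨ F.anc v u)
  symm := ⟨fun _ _ h => ⟨Ne.symm h.1, h.2.symm⟩⟩
  loopless := ⟨fun _ h => h.1 rfl⟩

/-- A rooted forest has height at most `t` iff every path from a root to a leaf has
at most `t` vertices; equivalently, every chain in the ancestor order has at most
`t` elements. -/
def RootedForest.HeightLE {V : Type*} (F : RootedForest V) (t : ℕ) : Prop :=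
  ∀ s : Finset V, (∀ u ∈ s, ∀ v ∈ s, F.anc u v ∨ F.anc v u) → s.card ≤ t

/-- The tree-depth of a graph `G` : the least `t` such that `G` is a subgraph of the
closure of some rooted forest on `V(G)` of height at most `t`. -/
noncomputable def treeDepth {V : Type*} (G : SimpleGraph V) : ℕ :=
  sInf { t | ∃ F : RootedForest V, F.HeightLE t ∧ G ≤ F.closure }

/-- A path decomposition of `G`: a finite sequence of bags `B 0, …, B (n-1) ⊆ V(G)`
such that every vertex lies in some bag, every edge has both endpoints in a common
bag, and for each vertex the indices of bags containing it form an interval. -/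
def IsPathDecomposition {V : Type*} (G : SimpleGraph V) {n : ℕ}
    (B : Fin n → Finset V) : Prop :=
  (∀ v : V, ∃ i, v ∈ B i) ∧
  (∀ u v : V, G.Adj u v → ∃ i, u ∈ B i ∧ v ∈ B i) ∧
  (∀ (v : V) (i j k : Fin n), i ≤ j → j ≤ k → v ∈ B i → v ∈ B k → v ∈ B j)

/-- The path-width of `G`: the minimum, over all path decompositions of `G`, of the
maximum bag size minus 1 (a decomposition has width at most `w` iff all its bags
have at most `w + 1` vertices). -/
noncomputable def pathWidth {V : Type*} (G : SimpleGraph V) : ℕ :=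
  sInf { w | ∃ (n : ℕ) (B : Fin n → Finset V),
    IsPathDecomposition G B ∧ ∀ i, (B i).card ≤ w + 1 }

/-!
Order the vertices of a forest `F` of height `t` so that every subtree is an interval
(a depth-first order), and take as the bag of each vertex the set of its ancestors. Bags are
chains of `F`, hence have at most `t` vertices; every edge of `clos(F)` joins a vertex to one of
its ancestors, so lies in a bag; and the bags containing `v` are those of the descendants of `v`,
which form an interval. A depth-first order is obtained by comparing ancestor sets
colexicographically, with respect to a weight that strictly decreases from ancestors to
descendants: the two ancestor sets then first differ at the point where the branches split.
-/

open Finset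

namespace Finset

lemma toColex_le_toColex_iff_of_subset {α : Type*} [PartialOrder α] {s t t' : Finset α} {m : α}
    (hsub : t' ⊆ t) (hm : m ∈ t') (hms : m ∉ s) (hdisj : ∀ y ∈ t, y ∉ t' → y ∉ s)
    (hle : ∀ y ∈ t, y ∉ t' → y ≤ m) :
    toColex t ≤ toColex s ↔ toColex t' ≤ toColex s := by
  simp only [Colex.toColex_le_toColex]
  constructor
  · intro h k hkt' hks
    obtain ⟨b, hbs, hbt, hkb⟩ := h (hsub hkt') hks
    exact ⟨b, hbs, fun hbt' => hbt (hsub hbt'), hkb⟩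
  · intro h k hkt hks
    have lift : ∀ {j}, j ∈ t' → j ∉ s → ∃ b ∈ s, b ∉ t ∧ j ≤ b := by
      intro j hjt' hjs
      obtain ⟨b, hbs, hbt', hjb⟩ := h hjt' hjs
      exact ⟨b, hbs, fun hbt => hdisj b hbt hbt' hbs, hjb⟩
    by_cases hkt' : k ∈ t'
    · exact lift hkt' hks
    · obtain ⟨b, hbs, hbt, hmb⟩ := lift hm hms
      exact ⟨b, hbs, hbt, (hle k hkt hkt').trans hmb⟩

end Finset

section

variable {V : Type*}

lemma IsPathDecomposition.of_le {G H : SimpleGraph V} {n : ℕ} {B : Fin n → Finset V}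
    (hB : IsPathDecomposition H B) (hGH : G ≤ H) : IsPathDecomposition G B :=
  ⟨hB.1, fun u v huv => hB.2.1 u v (hGH huv), hB.2.2⟩

lemma pathWidth_le {G : SimpleGraph V} {n w : ℕ} {B : Fin n → Finset V}
    (hB : IsPathDecomposition G B) (hcard : ∀ i, #(B i) ≤ w + 1) : pathWidth G ≤ w :=
  Nat.sInf_le ⟨n, B, hB, hcard⟩

namespace RootedForest

def ofInjective {α : Type*} [LinearOrder α] (f : V → α) (hf : Function.Injective f) :
    RootedForest V where
  anc u v := f u ≤ f v
  refl _ := le_rfl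
  antisymm _ _ h₁ h₂ := hf (le_antisymm h₁ h₂)
  trans _ _ _ := le_trans
  upChain _ _ _ _ _ := le_total _ _

lemma HeightLE.one_le [Nonempty V] {F : RootedForest V} {t : ℕ} (hF : F.HeightLE t) :
    1 ≤ t := by
  simpa using hF {Classical.arbitrary V} (by simp [F.refl])

variable (F : RootedForest V) [Fintype V]

open scoped Classical in
noncomputable def ancestors (v : V) : Finset V := {u | F.anc u v}

open scoped Classical in
noncomputable def descendants (v : V) : Finset V := {u | F.anc v u}

@[simp] lemma mem_ancestors {u v : V} : u ∈ F.ancestors v ↔ F.anc u v := by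
  simp [ancestors]

@[simp] lemma mem_descendants {u v : V} : u ∈ F.descendants v ↔ F.anc v u := by
  simp [descendants]

theorem exists_isPathDecomposition_closure [LinearOrder V]
    (hconv : ∀ v, Set.OrdConnected {x | F.anc v x}) {t : ℕ} (hF : F.HeightLE t) :
    ∃ B : Fin (Fintype.card V) → Finset V,
      IsPathDecomposition F.closure B ∧ ∀ i, #(B i) ≤ t := by
  let e := monoEquivOfFin V rfl
  refine ⟨fun i => F.ancestors (e i), ⟨fun v => ⟨e.symm v, by simp [F.refl]⟩, ?_, ?_⟩, ?_⟩
  · rintro u v ⟨-, huv | hvu⟩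
    exacts [⟨e.symm v, by simp [huv, F.refl]⟩, ⟨e.symm u, by simp [hvu, F.refl]⟩]
  · intro v i j k hij hjk hi hk
    simp only [mem_ancestors] at hi hk ⊢
    exact (hconv v).out hi hk ⟨e.monotone hij, e.monotone hjk⟩
  · exact fun i => hF _ fun a ha b hb =>
      F.upChain a b _ ((F.mem_ancestors).1 ha) ((F.mem_ancestors).1 hb)

lemma exists_heightLE_treeDepth (G : SimpleGraph V) :
    ∃ F : RootedForest V, F.HeightLE (treeDepth G) ∧ G ≤ F.closure :=
  Nat.sInf_mem (s := {t | ∃ F : RootedForest V, F.HeightLE t ∧ G ≤ F.closure})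
    ⟨Fintype.card V, ofInjective _ (Fintype.equivFin V).injective,
      fun s _ => card_le_univ s, fun _ _ huv => ⟨G.ne_of_adj huv, le_total _ _⟩⟩

noncomputable def weight : V ↪ ℕ ×ₗ ℕ where
  toFun v := toLex (#(F.descendants v), Fintype.equivFin V v)
  inj' _ _ h :=
    (Fintype.equivFin V).injective (Fin.val_injective (congrArg (fun p => (ofLex p).2) h))

lemma weight_lt_weight {u v : V} (huv : F.anc u v) (hne : u ≠ v) : F.weight v < F.weight u := by
  refine Prod.Lex.toLex_lt_toLex.2 (Or.inl (card_lt_card ?_))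
  refine (ssubset_iff_of_subset fun x hx => ?_).2 ⟨u, ?_, ?_⟩
  · simp only [mem_descendants] at hx ⊢
    exact F.trans _ _ _ huv hx
  · simp [F.refl]
  · simpa using fun hvu => hne (F.antisymm u v huv hvu)

noncomputable def dfsKey (v : V) : Colex (Finset (ℕ ×ₗ ℕ)) :=
  toColex ((F.ancestors v).map F.weight)

lemma ancestors_injective : Function.Injective F.ancestors := fun u v h =>
  F.antisymm u v (by rw [← F.mem_ancestors, ← h]; exact (F.mem_ancestors).2 (F.refl u))
    (by rw [← F.mem_ancestors, h]; exact (F.mem_ancestors).2 (F.refl v))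

lemma dfsKey_injective : Function.Injective F.dfsKey :=
  toColex.injective.comp ((map_injective _).comp F.ancestors_injective)

lemma ancestors_subset_ancestors {u v : V} (huv : F.anc u v) : F.ancestors u ⊆ F.ancestors v :=
  fun _ hx => (F.mem_ancestors).2 (F.trans _ _ _ ((F.mem_ancestors).1 hx) huv)

lemma dfsKey_le_iff_of_anc {v a x : V} (hva : F.anc v a) (hvx : ¬ F.anc v x) :
    F.dfsKey a ≤ F.dfsKey x ↔ F.dfsKey v ≤ F.dfsKey x := by
  have below : ∀ y, F.anc y a → ¬ F.anc y v → F.anc v y := fun y hya hyv =>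
    (F.upChain y v a hya hva).resolve_left hyv
  refine toColex_le_toColex_iff_of_subset (m := F.weight v)
    (map_subset_map.2 (F.ancestors_subset_ancestors hva)) ?_ ?_ ?_ ?_
  · simpa [dfsKey] using F.refl v
  · simpa using hvx
  · simp only [forall_mem_map, mem_map', mem_ancestors]
    exact fun y hya hyv hyx => hvx (F.trans _ _ _ (below y hya hyv) hyx)
  · simp only [forall_mem_map, mem_map', mem_ancestors]
    exact fun y hya hyv =>
      (F.weight_lt_weight (below y hya hyv) fun h => hyv (h ▸ F.refl v)).le

lemma anc_of_dfsKey_le_of_le {v a x c : V} (hva : F.anc v a) (hvc : F.anc v c)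
    (hax : F.dfsKey a ≤ F.dfsKey x) (hxc : F.dfsKey x ≤ F.dfsKey c) : F.anc v x := by
  by_contra h
  have hvx : F.dfsKey v ≤ F.dfsKey x := (F.dfsKey_le_iff_of_anc hva h).1 hax
  have hcx : F.dfsKey c ≤ F.dfsKey x := (F.dfsKey_le_iff_of_anc hvc h).2 hvx
  exact h (F.dfsKey_injective (le_antisymm hxc hcx) ▸ hvc)

end RootedForest

end

/-- For every finite simple graph `G` with at least one vertex, `pw(G) + 1 ≤ td(G)`. -/
theorem pathWidth_add_one_le_treeDepth {V : Type*} [Fintype V] [Nonempty V]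
    (G : SimpleGraph V) : pathWidth G + 1 ≤ treeDepth G := by
  obtain ⟨F, hF, hGF⟩ := RootedForest.exists_heightLE_treeDepth G
  let _ : LinearOrder V := LinearOrder.lift' F.dfsKey F.dfsKey_injective
  have hconv : ∀ v, Set.OrdConnected {x | F.anc v x} := fun v =>
    ⟨fun _ ha _ hc _ hx => F.anc_of_dfsKey_le_of_le ha hc hx.1 hx.2⟩
  obtain ⟨B, hB, hcard⟩ := F.exists_isPathDecomposition_closure hconv hF
  have hpw : pathWidth G ≤ treeDepth G - 1 :=
    pathWidth_le (hB.of_le hGF) fun i => (hcard i).trans (by omega)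
  have htd : 1 ≤ treeDepth G := hF.one_le
  omega
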